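/- Let s ∈ (0,1), n ≥ 1, and let B₁ ⊂ ℝⁿ be the open unit ball. Suppose E^k (k ∈ ℕ) are admissible triples each of which is a minimizer of F^s in B₁, and suppose E^k → E in L¹_loc(ℝⁿ) for some admissible triple E. Then E is a minimizer of F^s in B₁ and lim_{k→∞} F^s(E^k, B₁) = F^s(E, B₁). (Compactness of the class of minimizers.) -/

import Mathlib

open MeasureTheory Filter ENNReal

/-- The nonlocal interaction `L^s(A,B) = ∫_A ∫_B |x-y|^{-(n+s)} dy dx ∈ [0,∞]`. -/
noncomputable def Ls (n : ℕ) (s : ℝ) (A B : Set (EuclideanSpace ℝ (Fin n))) : ℝ≥0∞ :=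
  ∫⁻ x in A, ∫⁻ y in B, ENNReal.ofReal (1 / ‖x - y‖ ^ ((n : ℝ) + s))

/-- The nonlocal area `Per^s_Ω(A,B)`. -/
noncomputable def nlArea (n : ℕ) (s : ℝ) (Ω A B : Set (EuclideanSpace ℝ (Fin n))) : ℝ≥0∞ :=
  Ls n s (A ∩ Ω) (B ∩ Ω) + Ls n s (A ∩ Ω) (B ∩ Ωᶜ) + Ls n s (A ∩ Ωᶜ) (B ∩ Ω)

/-- The fractional `s`-perimeter `Per^s_Ω(E) = Per^s_Ω(E, Eᶜ)`. -/
noncomputable def nlPer (n : ℕ) (s : ℝ) (Ω E : Set (EuclideanSpace ℝ (Fin n))) : ℝ≥0∞ :=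
  nlArea n s Ω E Eᶜ

/-- An admissible triple (3-part partition of `ℝⁿ` up to null sets);
`Em`, `E0`, `E1` stand for `E₋₁`, `E₀`, `E₁`. -/
def Admissible (n : ℕ) (Em E0 E1 : Set (EuclideanSpace ℝ (Fin n))) : Prop :=
  MeasurableSet Em ∧ MeasurableSet E0 ∧ MeasurableSet E1 ∧
  volume ((Em ∪ E0 ∪ E1)ᶜ) = 0 ∧
  volume (Em ∩ E0) = 0 ∧ volume (Em ∩ E1) = 0 ∧ volume (E0 ∩ E1) = 0

/-- The weighted nonlocal energy
`F^s(E,Ω) = σ_{-1,0} Per^s_Ω(E₋₁,E₀) + σ_{0,1} Per^s_Ω(E₀,E₁) + σ_{-1,1} Per^s_Ω(E₋₁,E₁)`. -/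
noncomputable def Fs (n : ℕ) (s σm0 σ01 σm1 : ℝ)
    (Ω Em E0 E1 : Set (EuclideanSpace ℝ (Fin n))) : ℝ≥0∞ :=
  ENNReal.ofReal σm0 * nlArea n s Ω Em E0 + ENNReal.ofReal σ01 * nlArea n s Ω E0 E1 +
    ENNReal.ofReal σm1 * nlArea n s Ω Em E1

/-- `E` is a minimizer of `F^s` in `Ω`: `F^s(E,Ω) ≤ F^s(Ẽ,Ω)` for every admissible `Ẽ`
agreeing with `E` outside `Ω` up to null sets. -/
def Minimizer (n : ℕ) (s σm0 σ01 σm1 : ℝ)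
    (Ω Em E0 E1 : Set (EuclideanSpace ℝ (Fin n))) : Prop :=
  Admissible n Em E0 E1 ∧
  ∀ Fm F0 F1 : Set (EuclideanSpace ℝ (Fin n)), Admissible n Fm F0 F1 →
    volume (symmDiff (Fm ∩ Ωᶜ) (Em ∩ Ωᶜ)) = 0 →
    volume (symmDiff (F0 ∩ Ωᶜ) (E0 ∩ Ωᶜ)) = 0 →
    volume (symmDiff (F1 ∩ Ωᶜ) (E1 ∩ Ωᶜ)) = 0 →
    Fs n s σm0 σ01 σm1 Ω Em E0 E1 ≤ Fs n s σm0 σ01 σm1 Ω Fm F0 F1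

/-- `χ_{E^k} → χ_E` in `L¹_loc(ℝⁿ)`. -/
def TendstoL1loc (n : ℕ) (Ek : ℕ → Set (EuclideanSpace ℝ (Fin n)))
    (E : Set (EuclideanSpace ℝ (Fin n))) : Prop :=
  ∀ K : Set (EuclideanSpace ℝ (Fin n)), IsCompact K →
    Tendsto (fun k => volume (symmDiff (Ek k) E ∩ K)) atTop (nhds 0)


/-!
Along a subsequence the phases converge almost everywhere, so Fatou's lemma on `ℝⁿ × ℝⁿ` gives
`F^s(E, B₁) ≤ liminf F^s(E^k, B₁)`. Conversely, if `F` agrees with `E` outside `B₁`, the triple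
equal to `F` inside `B₁` and to `E^k` outside is a competitor for `E^k`; its energy exceeds
`F^s(F, B₁)` by at most the interaction of `B₁` with `(E^k_i Δ E_i) \ B₁`. This error tends to
zero because `y ↦ ∫_{B₁} |x-y|^{-(n+s)} dx` is integrable on `B₁ᶜ` (for `s < 1` the ball has
finite `s`-perimeter) and `E^k → E` locally. Hence `limsup F^s(E^k, B₁) ≤ F^s(F, B₁)`:
with `F = E` the energies converge, and for arbitrary `F` the limit is a minimizer.
-/

open Metric Set Module Topology

local notation "ℝ^" n:max => EuclideanSpace ℝ (Fin n)

section Polar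

variable {E : Type*} [NormedAddCommGroup E] [NormedSpace ℝ E] [FiniteDimensional ℝ E]
  [MeasurableSpace E] [BorelSpace E] [Nontrivial E] (μ : Measure E) [μ.IsAddHaarMeasure]

theorem lintegral_compl_ball_rpow_neg_norm {p d : ℝ} (hp : (finrank ℝ E : ℝ) < p) (hd : 0 < d) :
    ∫⁻ z in (ball (0 : E) d)ᶜ, ENNReal.ofReal (‖z‖ ^ (-p)) ∂μ =
      ENNReal.ofReal (finrank ℝ E * μ.real (ball 0 1) *
        (d ^ ((finrank ℝ E : ℝ) - p) / (p - finrank ℝ E))) := by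
  set N := finrank ℝ E
  have hN : 1 ≤ N := finrank_pos
  have hexp : (N : ℝ) - p - 1 < -1 := by linarith
  set g : ℝ → ℝ := (Ici d).indicator fun r => r ^ (-p)
  have hradial : ∀ y ∈ Ioi (0 : ℝ),
      y ^ (N - 1) • g y = (Ici d).indicator (fun r => r ^ ((N : ℝ) - p - 1)) y := by
    intro y (hy : 0 < y)
    by_cases hyd : y ∈ Ici d
    · simp only [g, indicator_of_mem hyd, smul_eq_mul]
      rw [← Real.rpow_natCast, ← Real.rpow_add hy, Nat.cast_sub hN]
      ring_nf
    · simp [g, hyd]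
  have hint : Integrable (fun z : E => g ‖z‖) μ := by
    rw [integrable_fun_norm_addHaar μ, integrableOn_congr_fun hradial measurableSet_Ioi,
      integrableOn_indicator_iff measurableSet_Ici, inter_eq_left.mpr (Ici_subset_Ioi.mpr hd),
      integrableOn_Ici_iff_integrableOn_Ioi]
    exact integrableOn_Ioi_rpow_of_lt hexp hd
  have hcompl : ∀ z : E, (ball (0 : E) d)ᶜ.indicator (fun z => ENNReal.ofReal (‖z‖ ^ (-p))) z
      = ENNReal.ofReal (g ‖z‖) := by
    intro z
    by_cases hz : z ∈ (ball (0 : E) d)ᶜ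
    · have : ‖z‖ ∈ Ici d := by simpa using hz
      simp [g, hz, this]
    · have : ‖z‖ ∉ Ici d := by simpa using hz
      simp [g, hz, this]
  rw [← lintegral_indicator measurableSet_ball.compl]
  simp_rw [hcompl]
  rw [← ofReal_integral_eq_lintegral_ofReal hint
    (ae_of_all _ fun z => indicator_nonneg (fun r hr => Real.rpow_nonneg (hd.le.trans hr) _) _),
    integral_fun_norm_addHaar μ, setIntegral_congr_fun measurableSet_Ioi hradial,
    integral_indicator measurableSet_Ici, Measure.restrict_restrict' measurableSet_Ioi,
    inter_eq_left.mpr (Ici_subset_Ioi.mpr hd), integral_Ici_eq_integral_Ioi,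
    integral_Ioi_rpow_of_lt hexp hd]
  congr 1
  rw [nsmul_eq_mul, smul_eq_mul, ← mul_assoc]
  congr 1
  rw [show (N : ℝ) - p - 1 + 1 = N - p by ring, neg_div, ← div_neg, neg_sub]

theorem integrableOn_ball_one_sub_norm_rpow_neg {s : ℝ} (hs : s < 1) :
    IntegrableOn (fun x : E => (1 - ‖x‖) ^ (-s)) (ball 0 1) μ := by
  rw [integrableOn_fun_norm_addHaar μ (f := fun r => (1 - r) ^ (-s))]
  have hprofile : IntegrableOn (fun y : ℝ => (1 - y) ^ (-s)) (Ioo 0 1) := by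
    have h := (intervalIntegral.intervalIntegrable_rpow' (r := -s) (a := 1) (b := 0)
      (by linarith)).comp_sub_left 1
    simp only [sub_self, sub_zero] at h
    exact (intervalIntegrable_iff_integrableOn_Ioo_of_le zero_le_one).mp h
  refine hprofile.mono' (by fun_prop) ?_
  filter_upwards [ae_restrict_mem measurableSet_Ioo] with y ⟨hy0, hy1⟩
  rw [smul_eq_mul, norm_mul, norm_pow, Real.norm_of_nonneg hy0.le,
    Real.norm_of_nonneg (Real.rpow_nonneg (by linarith) _)]
  exact mul_le_of_le_one_left (Real.rpow_nonneg (by linarith) _) (pow_le_one₀ hy0.le hy1.le)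

end Polar

theorem ENNReal.le_liminf_add (u v : ℕ → ℝ≥0∞) :
    liminf u atTop + liminf v atTop ≤ liminf (fun k => u k + v k) atTop := by
  rw [liminf_eq_iSup_iInf_of_nat, liminf_eq_iSup_iInf_of_nat, liminf_eq_iSup_iInf_of_nat,
    ENNReal.iSup_add]
  refine iSup_le fun a => ?_
  rw [ENNReal.add_iSup]
  refine iSup_le fun b => le_iSup_of_le (max a b) (le_iInf₂ fun i hi => ?_)
  exact add_le_add (iInf₂_le i ((le_max_left a b).trans hi))
    (iInf₂_le i ((le_max_right a b).trans hi))

theorem le_liminf_of_forall_exists_subseq {α : Type*} [CompleteLinearOrder α] [DenselyOrdered α]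
    {u : ℕ → α} {a : α}
    (h : ∀ φ : ℕ → ℕ, StrictMono φ → ∃ ψ : ℕ → ℕ, StrictMono ψ ∧ a ≤ liminf (u ∘ φ ∘ ψ) atTop) :
    a ≤ liminf u atTop := by
  by_contra! hlt
  obtain ⟨c, hc, hca⟩ := exists_between hlt
  obtain ⟨φ, hφ, huφ⟩ :=
    extraction_of_frequently_atTop (frequently_lt_of_liminf_lt (by isBoundedDefault) hc)
  obtain ⟨ψ, -, hψ⟩ := h φ hφ
  have : liminf (u ∘ φ ∘ ψ) atTop ≤ c :=
    liminf_le_of_frequently_le (Frequently.of_forall fun k => (huφ (ψ k)).le) (by isBoundedDefault)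
  exact (hψ.trans this).not_gt hca

theorem tendsto_setLIntegral_zero_of_tendsto_measure_inter_closedBall {α : Type*}
    [PseudoMetricSpace α] [MeasurableSpace α] [OpensMeasurableSpace α] {μ : Measure α}
    {f : α → ℝ≥0∞} (hf : ∫⁻ x, f x ∂μ ≠ ⊤) (x₀ : α) {Z : ℕ → Set α}
    (hZ : ∀ R : ℝ, Tendsto (fun k => μ (Z k ∩ closedBall x₀ R)) atTop (𝓝 0)) :
    Tendsto (fun k => ∫⁻ x in Z k, f x ∂μ) atTop (𝓝 0) := by
  rw [ENNReal.tendsto_nhds_zero]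
  intro ε hε
  have hε2 : ε / 2 ≠ 0 := (ENNReal.half_pos hε.ne').ne'
  set ν := μ.withDensity f
  have htail : Tendsto (fun m : ℕ => ν (closedBall x₀ m)ᶜ) atTop (𝓝 0) := by
    have hempty : ⋂ m : ℕ, (closedBall x₀ m)ᶜ = ∅ := by
      simp [← compl_iUnion, iUnion_closedBall_nat]
    rw [← measure_empty (μ := ν), ← hempty]
    refine tendsto_measure_iInter_atTop (fun m => measurableSet_closedBall.compl.nullMeasurableSet)
      (fun i j hij => compl_subset_compl.mpr (closedBall_subset_closedBall (by exact_mod_cast hij)))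
      ⟨0, ?_⟩
    rw [withDensity_apply _ measurableSet_closedBall.compl]
    exact ne_top_of_le_ne_top hf (setLIntegral_le_lintegral _ _)
  obtain ⟨m, hm⟩ := (htail.eventually (gt_mem_nhds (pos_iff_ne_zero.mpr hε2))).exists
  obtain ⟨δ, hδ, hsmall⟩ := exists_pos_setLIntegral_lt_of_measure_lt hf hε2
  filter_upwards [(hZ m).eventually (gt_mem_nhds hδ)] with k hk
  calc ∫⁻ x in Z k, f x ∂μ
      ≤ ∫⁻ x in (Z k ∩ closedBall x₀ m) ∪ (closedBall x₀ m)ᶜ, f x ∂μ :=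
        lintegral_mono_set fun x hx => by by_cases h : x ∈ closedBall x₀ m <;> simp [hx, h]
    _ ≤ (∫⁻ x in Z k ∩ closedBall x₀ m, f x ∂μ) + ∫⁻ x in (closedBall x₀ m)ᶜ, f x ∂μ :=
        lintegral_union_le _ _ _
    _ ≤ ε / 2 + ε / 2 := by
        gcongr
        · exact (hsmall _ hk).le
        · rw [← withDensity_apply _ measurableSet_closedBall.compl]; exact hm.le
    _ = ε := ENNReal.add_halves ε

section Kernel

variable {n : ℕ} {s : ℝ}

noncomputable def fracKernel (n : ℕ) (s : ℝ) (x y : ℝ^n) : ℝ≥0∞ :=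
  ENNReal.ofReal (1 / ‖x - y‖ ^ ((n : ℝ) + s))

theorem fracKernel_comm (x y : ℝ^n) : fracKernel n s x y = fracKernel n s y x := by
  rw [fracKernel, fracKernel, norm_sub_rev]

theorem measurable_fracKernel : Measurable (Function.uncurry (fracKernel n s)) := by
  unfold fracKernel Function.uncurry; fun_prop

theorem Ls_eq (A B : Set (ℝ^n)) : Ls n s A B = ∫⁻ x in A, ∫⁻ y in B, fracKernel n s x y := rfl

theorem Ls_comm (A B : Set (ℝ^n)) : Ls n s A B = Ls n s B A := by
  rw [Ls_eq, Ls_eq, lintegral_lintegral_swap measurable_fracKernel.aemeasurable]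
  simp_rw [fracKernel_comm]

theorem Ls_mono {A A' B B' : Set (ℝ^n)} (hA : A ⊆ A') (hB : B ⊆ B') :
    Ls n s A B ≤ Ls n s A' B' :=
  (lintegral_mono fun _ => lintegral_mono_set hB).trans (lintegral_mono_set hA)

theorem Ls_congr {A A' B B' : Set (ℝ^n)} (hA : A =ᵐ[volume] A') (hB : B =ᵐ[volume] B') :
    Ls n s A B = Ls n s A' B' := by
  rw [Ls_eq, Ls_eq, Measure.restrict_congr_set hA]
  exact lintegral_congr fun x => by rw [Measure.restrict_congr_set hB]

theorem Ls_union_left_le (A B C : Set (ℝ^n)) : Ls n s (A ∪ B) C ≤ Ls n s A C + Ls n s B C :=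
  lintegral_union_le _ _ _

theorem Ls_union_right_le (A B C : Set (ℝ^n)) : Ls n s A (B ∪ C) ≤ Ls n s A B + Ls n s A C := by
  rw [Ls_comm, Ls_comm A B, Ls_comm A C]; exact Ls_union_left_le B C A

theorem lintegral_compl_ball_fracKernel_le [Nontrivial (ℝ^n)] (hs : 0 < s) {x : ℝ^n}
    (hx : ‖x‖ < 1) :
    ∫⁻ y in (ball 0 1)ᶜ, fracKernel n s x y ≤
      ENNReal.ofReal (n * volume.real (ball (0 : ℝ^n) 1) * ((1 - ‖x‖) ^ (-s) / s)) := by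
  have hd : 0 < 1 - ‖x‖ := by linarith
  have hkernel : ∀ y, fracKernel n s x y = ENNReal.ofReal (‖y - x‖ ^ (-((n : ℝ) + s))) := by
    intro y; rw [fracKernel, norm_sub_rev, Real.rpow_neg (norm_nonneg _), one_div]
  have hfar : (ball (0 : ℝ^n) 1)ᶜ ⊆ (fun y => y - x) ⁻¹' (ball 0 (1 - ‖x‖))ᶜ := by
    intro y hy
    simp only [mem_compl_iff, mem_ball_zero_iff, not_lt, mem_preimage] at hy ⊢
    linarith [norm_sub_norm_le y x]
  have htranslate := lintegral_sub_right_eq_self (μ := (volume : Measure (ℝ^n)))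
    ((ball (0 : ℝ^n) (1 - ‖x‖))ᶜ.indicator fun z => ENNReal.ofReal (‖z‖ ^ (-((n : ℝ) + s)))) x
  rw [lintegral_indicator measurableSet_ball.compl,
    lintegral_compl_ball_rpow_neg_norm volume (by simpa using hs) hd, finrank_euclideanSpace_fin,
    show (n : ℝ) - (n + s) = -s by ring, show (n : ℝ) + s - n = s by ring] at htranslate
  rw [← htranslate]
  simp_rw [hkernel]
  rw [← lintegral_indicator measurableSet_ball.compl]
  refine lintegral_mono fun y => ?_
  by_cases hy : y ∈ (ball (0 : ℝ^n) 1)ᶜ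
  · rw [indicator_of_mem hy, indicator_of_mem (mem_preimage.mp (hfar hy))]
  · rw [indicator_of_notMem hy]; exact zero_le

theorem Ls_compl_ball_ball_ne_top (hn : 1 ≤ n) (hs : s ∈ Ioo (0 : ℝ) 1) :
    Ls n s (ball (0 : ℝ^n) 1)ᶜ (ball 0 1) ≠ ⊤ := by
  have : NeZero n := ⟨by omega⟩
  set C := n * volume.real (ball (0 : ℝ^n) 1)
  rw [Ls_comm, Ls_eq]
  refine (lt_of_le_of_lt (setLIntegral_mono (by fun_prop) fun x hx =>
    lintegral_compl_ball_fracKernel_le hs.1 (mem_ball_zero_iff.mp hx)) ?_).ne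
  refine IntegrableOn.setLIntegral_lt_top ?_
  exact ((integrableOn_ball_one_sub_norm_rpow_neg volume hs.2).div_const s).const_mul C

end Kernel

def TendstoAE (n : ℕ) (Ek : ℕ → Set (ℝ^n)) (E : Set (ℝ^n)) : Prop :=
  ∀ᵐ x ∂(volume : Measure (ℝ^n)), ∀ᶠ k in atTop, (x ∈ Ek k ↔ x ∈ E)

section LowerSemicontinuity

variable {n : ℕ} {s : ℝ}

theorem TendstoAE.inter_right {Ek : ℕ → Set (ℝ^n)} {E : Set (ℝ^n)} (h : TendstoAE n Ek E)
    (R : Set (ℝ^n)) : TendstoAE n (fun k => Ek k ∩ R) (E ∩ R) := by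
  filter_upwards [h] with x hx
  exact hx.mono fun k hk => by simp [hk]

theorem TendstoAE.comp {Ek : ℕ → Set (ℝ^n)} {E : Set (ℝ^n)} (h : TendstoAE n Ek E)
    {φ : ℕ → ℕ} (hφ : StrictMono φ) : TendstoAE n (Ek ∘ φ) E := by
  filter_upwards [h] with x hx
  exact hφ.tendsto_atTop.eventually hx

theorem TendstoL1loc.comp {Ek : ℕ → Set (ℝ^n)} {E : Set (ℝ^n)} (h : TendstoL1loc n Ek E)
    {φ : ℕ → ℕ} (hφ : StrictMono φ) : TendstoL1loc n (Ek ∘ φ) E :=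
  fun K hK => (h K hK).comp hφ.tendsto_atTop

/-- Borel–Cantelli along a subsequence on which `|(E^k Δ E) ∩ B_m| ≤ 2⁻ᵐ`. -/
theorem TendstoL1loc.exists_subseq_tendstoAE {Ek : ℕ → Set (ℝ^n)} {E : Set (ℝ^n)}
    (h : TendstoL1loc n Ek E) : ∃ φ : ℕ → ℕ, StrictMono φ ∧ TendstoAE n (Ek ∘ φ) E := by
  set D : ℕ → ℕ → Set (ℝ^n) := fun k m => symmDiff (Ek k) E ∩ closedBall 0 m
  have hsmall : ∀ m : ℕ, ∀ᶠ k in atTop, volume (D k m) ≤ 2⁻¹ ^ m := fun m =>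
    ENNReal.tendsto_nhds_zero.mp (h _ (isCompact_closedBall 0 m)) _
      (ENNReal.pow_pos (ENNReal.inv_pos.mpr ENNReal.ofNat_ne_top) m)
  obtain ⟨φ, hφ, hφsmall⟩ := extraction_forall_of_eventually hsmall
  have hsum : ∑' m, volume (D (φ m) m) ≠ ⊤ := by
    refine ne_top_of_le_ne_top ?_ (ENNReal.tsum_le_tsum hφsmall)
    rw [ENNReal.tsum_geometric, ENNReal.one_sub_inv_two, inv_inv]
    exact ENNReal.ofNat_ne_top
  refine ⟨φ, hφ, ?_⟩
  filter_upwards [ae_eventually_notMem hsum] with x hx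
  obtain ⟨m₀, hm₀⟩ := exists_nat_ge ‖x‖
  filter_upwards [hx, eventually_ge_atTop m₀] with m hxD hm
  have hball : x ∈ closedBall (0 : ℝ^n) m :=
    mem_closedBall_zero_iff.mpr (hm₀.trans (by exact_mod_cast hm))
  by_contra hiff
  exact hxD ⟨by rw [mem_symmDiff]; tauto, hball⟩

theorem Ls_eq_lintegral_prod {A B : Set (ℝ^n)} (hA : MeasurableSet A) (hB : MeasurableSet B) :
    Ls n s A B = ∫⁻ p, (A ×ˢ B).indicator (Function.uncurry (fracKernel n s)) p
      ∂(volume.prod volume) := by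
  rw [Ls_eq, lintegral_lintegral measurable_fracKernel.aemeasurable, Measure.prod_restrict,
    lintegral_indicator (hA.prod hB)]
  rfl

theorem Ls_le_liminf {A B : Set (ℝ^n)} {Ak Bk : ℕ → Set (ℝ^n)}
    (hA : MeasurableSet A) (hB : MeasurableSet B)
    (hAk : ∀ k, MeasurableSet (Ak k)) (hBk : ∀ k, MeasurableSet (Bk k))
    (hAconv : TendstoAE n Ak A) (hBconv : TendstoAE n Bk B) :
    Ls n s A B ≤ liminf (fun k => Ls n s (Ak k) (Bk k)) atTop := by
  have hpointwise : ∀ᵐ p ∂(volume.prod volume : Measure (ℝ^n × ℝ^n)),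
      (A ×ˢ B).indicator (Function.uncurry (fracKernel n s)) p ≤
        liminf (fun k => (Ak k ×ˢ Bk k).indicator (Function.uncurry (fracKernel n s)) p) atTop := by
    filter_upwards [Measure.quasiMeasurePreserving_fst.ae hAconv,
      Measure.quasiMeasurePreserving_snd.ae hBconv] with p hpA hpB
    refine le_liminf_of_le (by isBoundedDefault) ?_
    filter_upwards [hpA, hpB] with k hkA hkB
    have hmem : p ∈ Ak k ×ˢ Bk k ↔ p ∈ A ×ˢ B := by simp only [mem_prod, hkA, hkB]
    by_cases hp : p ∈ A ×ˢ B
    · rw [indicator_of_mem hp, indicator_of_mem (hmem.mpr hp)]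
    · rw [indicator_of_notMem hp, indicator_of_notMem (mt hmem.mp hp)]
  calc Ls n s A B
      = ∫⁻ p, (A ×ˢ B).indicator (Function.uncurry (fracKernel n s)) p ∂(volume.prod volume) :=
        Ls_eq_lintegral_prod hA hB
    _ ≤ ∫⁻ p, liminf (fun k => (Ak k ×ˢ Bk k).indicator (Function.uncurry (fracKernel n s)) p)
          atTop ∂(volume.prod volume) := lintegral_mono_ae hpointwise
    _ ≤ liminf (fun k => ∫⁻ p, (Ak k ×ˢ Bk k).indicator (Function.uncurry (fracKernel n s)) p
          ∂(volume.prod volume)) atTop :=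
        lintegral_liminf_le fun k => measurable_fracKernel.indicator ((hAk k).prod (hBk k))
    _ = liminf (fun k => Ls n s (Ak k) (Bk k)) atTop := by
        simp_rw [Ls_eq_lintegral_prod (hAk _) (hBk _)]

variable {Ω : Set (ℝ^n)}

theorem nlArea_le_liminf (hΩ : MeasurableSet Ω) {A B : Set (ℝ^n)} {Ak Bk : ℕ → Set (ℝ^n)}
    (hA : MeasurableSet A) (hB : MeasurableSet B)
    (hAk : ∀ k, MeasurableSet (Ak k)) (hBk : ∀ k, MeasurableSet (Bk k))
    (hAconv : TendstoAE n Ak A) (hBconv : TendstoAE n Bk B) :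
    nlArea n s Ω A B ≤ liminf (fun k => nlArea n s Ω (Ak k) (Bk k)) atTop := by
  have hin := Ls_le_liminf (s := s) (hA.inter hΩ) (hB.inter hΩ) (fun k => (hAk k).inter hΩ)
    (fun k => (hBk k).inter hΩ) (hAconv.inter_right Ω) (hBconv.inter_right Ω)
  have hout := Ls_le_liminf (s := s) (hA.inter hΩ) (hB.inter hΩ.compl) (fun k => (hAk k).inter hΩ)
    (fun k => (hBk k).inter hΩ.compl) (hAconv.inter_right Ω) (hBconv.inter_right Ωᶜ)
  have hout' := Ls_le_liminf (s := s) (hA.inter hΩ.compl) (hB.inter hΩ)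
    (fun k => (hAk k).inter hΩ.compl) (fun k => (hBk k).inter hΩ)
    (hAconv.inter_right Ωᶜ) (hBconv.inter_right Ω)
  exact (add_le_add (add_le_add hin hout) hout').trans
    (((add_le_add_left (ENNReal.le_liminf_add _ _) _)).trans (ENNReal.le_liminf_add _ _))

theorem Fs_le_liminf (hΩ : MeasurableSet Ω) (σm0 σ01 σm1 : ℝ) {Em E0 E1 : Set (ℝ^n)}
    {Emk E0k E1k : ℕ → Set (ℝ^n)} (hadm : Admissible n Em E0 E1)
    (hadmk : ∀ k, Admissible n (Emk k) (E0k k) (E1k k))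
    (hconvm : TendstoAE n Emk Em) (hconv0 : TendstoAE n E0k E0) (hconv1 : TendstoAE n E1k E1) :
    Fs n s σm0 σ01 σm1 Ω Em E0 E1 ≤
      liminf (fun k => Fs n s σm0 σ01 σm1 Ω (Emk k) (E0k k) (E1k k)) atTop := by
  have hm0 := nlArea_le_liminf (s := s) hΩ hadm.1 hadm.2.1 (fun k => (hadmk k).1)
    (fun k => (hadmk k).2.1) hconvm hconv0
  have h01 := nlArea_le_liminf (s := s) hΩ hadm.2.1 hadm.2.2.1 (fun k => (hadmk k).2.1)
    (fun k => (hadmk k).2.2.1) hconv0 hconv1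
  have hm1 := nlArea_le_liminf (s := s) hΩ hadm.1 hadm.2.2.1 (fun k => (hadmk k).1)
    (fun k => (hadmk k).2.2.1) hconvm hconv1
  calc Fs n s σm0 σ01 σm1 Ω Em E0 E1
      ≤ ENNReal.ofReal σm0 * liminf (fun k => nlArea n s Ω (Emk k) (E0k k)) atTop
        + ENNReal.ofReal σ01 * liminf (fun k => nlArea n s Ω (E0k k) (E1k k)) atTop
        + ENNReal.ofReal σm1 * liminf (fun k => nlArea n s Ω (Emk k) (E1k k)) atTop := by
        unfold Fs; gcongr
    _ = liminf (fun k => ENNReal.ofReal σm0 * nlArea n s Ω (Emk k) (E0k k)) atTop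
        + liminf (fun k => ENNReal.ofReal σ01 * nlArea n s Ω (E0k k) (E1k k)) atTop
        + liminf (fun k => ENNReal.ofReal σm1 * nlArea n s Ω (Emk k) (E1k k)) atTop := by
        simp only [liminf_const_mul_of_ne_top ofReal_ne_top]
    _ ≤ _ := (add_le_add_left (ENNReal.le_liminf_add _ _) _).trans (ENNReal.le_liminf_add _ _)

theorem Fs_le_liminf_of_tendstoL1loc (hΩ : MeasurableSet Ω) (σm0 σ01 σm1 : ℝ)
    {Em E0 E1 : Set (ℝ^n)} {Emk E0k E1k : ℕ → Set (ℝ^n)} (hadm : Admissible n Em E0 E1)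
    (hadmk : ∀ k, Admissible n (Emk k) (E0k k) (E1k k))
    (hconvm : TendstoL1loc n Emk Em) (hconv0 : TendstoL1loc n E0k E0)
    (hconv1 : TendstoL1loc n E1k E1) :
    Fs n s σm0 σ01 σm1 Ω Em E0 E1 ≤
      liminf (fun k => Fs n s σm0 σ01 σm1 Ω (Emk k) (E0k k) (E1k k)) atTop := by
  refine le_liminf_of_forall_exists_subseq fun φ hφ => ?_
  obtain ⟨ψm, hψm, hm⟩ := (hconvm.comp hφ).exists_subseq_tendstoAE
  obtain ⟨ψ0, hψ0, h0⟩ := (hconv0.comp (hφ.comp hψm)).exists_subseq_tendstoAE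
  obtain ⟨ψ1, hψ1, h1⟩ := (hconv1.comp ((hφ.comp hψm).comp hψ0)).exists_subseq_tendstoAE
  exact ⟨ψm ∘ ψ0 ∘ ψ1, hψm.comp (hψ0.comp hψ1), Fs_le_liminf hΩ σm0 σ01 σm1 hadm
    (fun k => hadmk _) ((hm.comp hψ0).comp hψ1) (h0.comp hψ1) h1⟩

end LowerSemicontinuity

section UpperBound

variable {n : ℕ} {s : ℝ} {Ω : Set (ℝ^n)}

theorem Admissible.ite (hΩ : MeasurableSet Ω) {Fm F0 F1 Km K0 K1 : Set (ℝ^n)}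
    (hF : Admissible n Fm F0 F1) (hK : Admissible n Km K0 K1) :
    Admissible n (Ω.ite Fm Km) (Ω.ite F0 K0) (Ω.ite F1 K1) := by
  obtain ⟨hFm, hF0, hF1, hFcover, hFm0, hFm1, hF01⟩ := hF
  obtain ⟨hKm, hK0, hK1, hKcover, hKm0, hKm1, hK01⟩ := hK
  have hdisjoint : ∀ {A B A' B' : Set (ℝ^n)}, volume (A ∩ B) = 0 → volume (A' ∩ B') = 0 →
      volume (Ω.ite A A' ∩ Ω.ite B B') = 0 := fun h h' => by
    rw [← ite_inter_inter]
    exact measure_mono_null (ite_subset_union _ _ _) (measure_union_null h h')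
  refine ⟨hΩ.ite hFm hKm, hΩ.ite hF0 hK0, hΩ.ite hF1 hK1, ?_, hdisjoint hFm0 hKm0,
    hdisjoint hFm1 hKm1, hdisjoint hF01 hK01⟩
  refine measure_mono_null (fun x hx => ?_) (measure_union_null hFcover hKcover)
  by_cases hxΩ : x ∈ Ω <;> simp_all [Set.ite]

theorem Ls_inter_compl_le {P : Set (ℝ^n)} (hP : P ⊆ Ω) (B B' : Set (ℝ^n)) :
    Ls n s P (B' ∩ Ωᶜ) ≤ Ls n s P (B ∩ Ωᶜ) + Ls n s (symmDiff B' B ∩ Ωᶜ) Ω := by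
  have hsplit : B' ∩ Ωᶜ ⊆ (B ∩ Ωᶜ) ∪ (symmDiff B' B ∩ Ωᶜ) := fun y ⟨hyB', hyΩ⟩ => by
    by_cases hyB : y ∈ B
    · exact Or.inl ⟨hyB, hyΩ⟩
    · exact Or.inr ⟨Or.inl ⟨hyB', hyB⟩, hyΩ⟩
  calc Ls n s P (B' ∩ Ωᶜ)
      ≤ Ls n s P (B ∩ Ωᶜ) + Ls n s P (symmDiff B' B ∩ Ωᶜ) :=
        (Ls_mono subset_rfl hsplit).trans (Ls_union_right_le _ _ _)
    _ ≤ Ls n s P (B ∩ Ωᶜ) + Ls n s (symmDiff B' B ∩ Ωᶜ) Ω := by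
        rw [Ls_comm P (symmDiff B' B ∩ Ωᶜ)]
        exact add_le_add le_rfl (Ls_mono subset_rfl hP)

theorem nlArea_ite_le (A A' B B' : Set (ℝ^n)) :
    nlArea n s Ω (Ω.ite A A') (Ω.ite B B') ≤
      nlArea n s Ω A B + (Ls n s (symmDiff A' A ∩ Ωᶜ) Ω + Ls n s (symmDiff B' B ∩ Ωᶜ) Ω) := by
  have hB := Ls_inter_compl_le (s := s) (inter_subset_right : A ∩ Ω ⊆ Ω) B B'
  have hA := Ls_inter_compl_le (s := s) (inter_subset_right : B ∩ Ω ⊆ Ω) A A'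
  rw [Ls_comm (B ∩ Ω), Ls_comm (B ∩ Ω)] at hA
  unfold nlArea
  rw [ite_inter_self, ite_inter_self, ite_inter_compl_self, ite_inter_compl_self]
  calc _ ≤ Ls n s (A ∩ Ω) (B ∩ Ω) + (Ls n s (A ∩ Ω) (B ∩ Ωᶜ) + Ls n s (symmDiff B' B ∩ Ωᶜ) Ω)
        + (Ls n s (A ∩ Ωᶜ) (B ∩ Ω) + Ls n s (symmDiff A' A ∩ Ωᶜ) Ω) := by gcongr
    _ = _ := by ring

theorem Fs_ite_le (σm0 σ01 σm1 : ℝ) (Fm F0 F1 Km K0 K1 : Set (ℝ^n)) :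
    Fs n s σm0 σ01 σm1 Ω (Ω.ite Fm Km) (Ω.ite F0 K0) (Ω.ite F1 K1) ≤
      Fs n s σm0 σ01 σm1 Ω Fm F0 F1 +
        (ENNReal.ofReal σm0 + ENNReal.ofReal σ01 + ENNReal.ofReal σm1) *
          (Ls n s (symmDiff Km Fm ∩ Ωᶜ) Ω + Ls n s (symmDiff K0 F0 ∩ Ωᶜ) Ω +
            Ls n s (symmDiff K1 F1 ∩ Ωᶜ) Ω) := by
  set em := Ls n s (symmDiff Km Fm ∩ Ωᶜ) Ω
  set e0 := Ls n s (symmDiff K0 F0 ∩ Ωᶜ) Ω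
  set e1 := Ls n s (symmDiff K1 F1 ∩ Ωᶜ) Ω
  have hm0 : nlArea n s Ω (Ω.ite Fm Km) (Ω.ite F0 K0) ≤ nlArea n s Ω Fm F0 + (em + e0 + e1) :=
    (nlArea_ite_le _ _ _ _).trans (add_le_add le_rfl le_self_add)
  have h01 : nlArea n s Ω (Ω.ite F0 K0) (Ω.ite F1 K1) ≤ nlArea n s Ω F0 F1 + (em + e0 + e1) :=
    (nlArea_ite_le _ _ _ _).trans (add_le_add le_rfl (by rw [add_assoc]; exact le_add_self))
  have hm1 : nlArea n s Ω (Ω.ite Fm Km) (Ω.ite F1 K1) ≤ nlArea n s Ω Fm F1 + (em + e0 + e1) :=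
    (nlArea_ite_le _ _ _ _).trans (add_le_add le_rfl (add_le_add le_self_add le_rfl))
  calc _ ≤ ENNReal.ofReal σm0 * (nlArea n s Ω Fm F0 + (em + e0 + e1))
        + ENNReal.ofReal σ01 * (nlArea n s Ω F0 F1 + (em + e0 + e1))
        + ENNReal.ofReal σm1 * (nlArea n s Ω Fm F1 + (em + e0 + e1)) := by unfold Fs; gcongr
    _ = _ := by unfold Fs; ring

theorem Ls_symmDiff_inter_compl_congr {E F : Set (ℝ^n)}
    (h : volume (symmDiff (F ∩ Ωᶜ) (E ∩ Ωᶜ)) = 0) (K : Set (ℝ^n)) :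
    Ls n s (symmDiff K F ∩ Ωᶜ) Ω = Ls n s (symmDiff K E ∩ Ωᶜ) Ω := by
  refine Ls_congr ?_ EventuallyEq.rfl
  rw [inter_symmDiff_distrib_right, inter_symmDiff_distrib_right]
  exact EventuallyEq.rfl.symmDiff (measure_symmDiff_eq_zero_iff.mp h)

/-- `hper` says that `y ↦ ∫_Ω K(y,·)` is integrable on `Ωᶜ`. -/
theorem tendsto_Ls_symmDiff_inter_compl (hΩ : MeasurableSet Ω) (hper : Ls n s Ωᶜ Ω ≠ ⊤)
    {Ek : ℕ → Set (ℝ^n)} {E : Set (ℝ^n)} (hconv : TendstoL1loc n Ek E) :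
    Tendsto (fun k => Ls n s (symmDiff (Ek k) E ∩ Ωᶜ) Ω) atTop (𝓝 0) := by
  have hlocal : ∀ R : ℝ, Tendsto (fun k => volume.restrict Ωᶜ (symmDiff (Ek k) E ∩ closedBall 0 R))
      atTop (𝓝 0) := fun R =>
    tendsto_of_tendsto_of_tendsto_of_le_of_le tendsto_const_nhds
      (hconv _ (isCompact_closedBall 0 R)) (fun k => zero_le) (fun k => Measure.restrict_le_self _)
  have h := tendsto_setLIntegral_zero_of_tendsto_measure_inter_closedBall
    (f := fun y => ∫⁻ x in Ω, fracKernel n s y x) hper 0 hlocal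
  simp only [Measure.restrict_restrict' hΩ.compl] at h
  exact h

theorem limsup_Fs_le_of_minimizer (hΩ : MeasurableSet Ω) (hper : Ls n s Ωᶜ Ω ≠ ⊤)
    {σm0 σ01 σm1 : ℝ} {Emk E0k E1k : ℕ → Set (ℝ^n)} {Em E0 E1 : Set (ℝ^n)}
    (hmin : ∀ k, Minimizer n s σm0 σ01 σm1 Ω (Emk k) (E0k k) (E1k k))
    (hconvm : TendstoL1loc n Emk Em) (hconv0 : TendstoL1loc n E0k E0)
    (hconv1 : TendstoL1loc n E1k E1) {Fm F0 F1 : Set (ℝ^n)} (hF : Admissible n Fm F0 F1)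
    (hm : volume (symmDiff (Fm ∩ Ωᶜ) (Em ∩ Ωᶜ)) = 0)
    (h0 : volume (symmDiff (F0 ∩ Ωᶜ) (E0 ∩ Ωᶜ)) = 0)
    (h1 : volume (symmDiff (F1 ∩ Ωᶜ) (E1 ∩ Ωᶜ)) = 0) :
    limsup (fun k => Fs n s σm0 σ01 σm1 Ω (Emk k) (E0k k) (E1k k)) atTop ≤
      Fs n s σm0 σ01 σm1 Ω Fm F0 F1 := by
  set c := ENNReal.ofReal σm0 + ENNReal.ofReal σ01 + ENNReal.ofReal σm1
  set err : ℕ → ℝ≥0∞ := fun k => Ls n s (symmDiff (Emk k) Em ∩ Ωᶜ) Ω +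
    Ls n s (symmDiff (E0k k) E0 ∩ Ωᶜ) Ω + Ls n s (symmDiff (E1k k) E1 ∩ Ωᶜ) Ω
  have herr : Tendsto (fun k => Fs n s σm0 σ01 σm1 Ω Fm F0 F1 + c * err k) atTop
      (𝓝 (Fs n s σm0 σ01 σm1 Ω Fm F0 F1)) := by
    have h := ((tendsto_Ls_symmDiff_inter_compl hΩ hper hconvm).add
      (tendsto_Ls_symmDiff_inter_compl hΩ hper hconv0)).add
      (tendsto_Ls_symmDiff_inter_compl hΩ hper hconv1)
    simpa using tendsto_const_nhds.add (ENNReal.Tendsto.const_mul h (Or.inr (by finiteness)))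
  have hcompare : ∀ k, Fs n s σm0 σ01 σm1 Ω (Emk k) (E0k k) (E1k k) ≤
      Fs n s σm0 σ01 σm1 Ω Fm F0 F1 + c * err k := fun k =>
    calc Fs n s σm0 σ01 σm1 Ω (Emk k) (E0k k) (E1k k)
        ≤ Fs n s σm0 σ01 σm1 Ω (Ω.ite Fm (Emk k)) (Ω.ite F0 (E0k k)) (Ω.ite F1 (E1k k)) :=
          (hmin k).2 _ _ _ (hF.ite hΩ (hmin k).1) (by simp [ite_inter_compl_self])
            (by simp [ite_inter_compl_self]) (by simp [ite_inter_compl_self])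
      _ ≤ _ := Fs_ite_le σm0 σ01 σm1 Fm F0 F1 (Emk k) (E0k k) (E1k k)
      _ = _ := by
          rw [Ls_symmDiff_inter_compl_congr hm, Ls_symmDiff_inter_compl_congr h0,
            Ls_symmDiff_inter_compl_congr h1]
  exact (limsup_le_limsup (Eventually.of_forall hcompare)).trans_eq herr.limsup_eq

end UpperBound

theorem minimizer_and_tendsto_Fs_of_tendstoL1loc {n : ℕ} {s : ℝ} {Ω : Set (ℝ^n)}
    (hΩ : MeasurableSet Ω) (hper : Ls n s Ωᶜ Ω ≠ ⊤) {σm0 σ01 σm1 : ℝ}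
    {Emk E0k E1k : ℕ → Set (ℝ^n)} {Em E0 E1 : Set (ℝ^n)}
    (hmin : ∀ k, Minimizer n s σm0 σ01 σm1 Ω (Emk k) (E0k k) (E1k k))
    (hadm : Admissible n Em E0 E1) (hconvm : TendstoL1loc n Emk Em)
    (hconv0 : TendstoL1loc n E0k E0) (hconv1 : TendstoL1loc n E1k E1) :
    Minimizer n s σm0 σ01 σm1 Ω Em E0 E1 ∧
      Tendsto (fun k => Fs n s σm0 σ01 σm1 Ω (Emk k) (E0k k) (E1k k)) atTop
        (𝓝 (Fs n s σm0 σ01 σm1 Ω Em E0 E1)) := by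
  have hlower := Fs_le_liminf_of_tendstoL1loc (s := s) hΩ σm0 σ01 σm1 hadm (fun k => (hmin k).1)
    hconvm hconv0 hconv1
  have hupper := fun {Fm F0 F1} => @limsup_Fs_le_of_minimizer n s Ω hΩ hper σm0 σ01 σm1
    Emk E0k E1k Em E0 E1 hmin hconvm hconv0 hconv1 Fm F0 F1
  refine ⟨⟨hadm, fun Fm F0 F1 hF hm h0 h1 => hlower.trans ?_⟩, ?_⟩
  · exact (liminf_le_limsup (by isBoundedDefault) (by isBoundedDefault)).trans (hupper hF hm h0 h1)
  · exact tendsto_of_le_liminf_of_limsup_le hlower (hupper hadm (by simp) (by simp) (by simp))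

theorem minimizers_compact_general
    (n : ℕ) (hn : 1 ≤ n) (s : ℝ) (hs : s ∈ Set.Ioo (0 : ℝ) 1)
    (σm0 σ01 σm1 : ℝ)
    (Emk E0k E1k : ℕ → Set (EuclideanSpace ℝ (Fin n)))
    (Em E0 E1 : Set (EuclideanSpace ℝ (Fin n)))
    (hmin : ∀ k, Minimizer n s σm0 σ01 σm1
      (Metric.ball (0 : EuclideanSpace ℝ (Fin n)) 1) (Emk k) (E0k k) (E1k k))
    (hadm : Admissible n Em E0 E1)
    (hconvm : TendstoL1loc n Emk Em) (hconv0 : TendstoL1loc n E0k E0)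
    (hconv1 : TendstoL1loc n E1k E1) :
    Minimizer n s σm0 σ01 σm1 (Metric.ball (0 : EuclideanSpace ℝ (Fin n)) 1) Em E0 E1 ∧
    Tendsto
      (fun k => Fs n s σm0 σ01 σm1
        (Metric.ball (0 : EuclideanSpace ℝ (Fin n)) 1) (Emk k) (E0k k) (E1k k))
      atTop
      (nhds (Fs n s σm0 σ01 σm1 (Metric.ball (0 : EuclideanSpace ℝ (Fin n)) 1) Em E0 E1)) :=
  minimizer_and_tendsto_Fs_of_tendstoL1loc measurableSet_ball (Ls_compl_ball_ball_ne_top hn hs)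
    hmin hadm hconvm hconv0 hconv1

/-- Compactness of the class of minimizers: an `L¹_loc` limit of minimizers of `F^s` in the
unit ball `B₁` is a minimizer, and the energies converge. -/
theorem minimizers_compact
    (n : ℕ) (hn : 1 ≤ n) (s : ℝ) (hs : s ∈ Set.Ioo (0 : ℝ) 1)
    (σm0 σ01 σm1 : ℝ) (hσm0 : 0 < σm0) (hσ01 : 0 < σ01) (hσm1 : 0 < σm1)
    (Emk E0k E1k : ℕ → Set (EuclideanSpace ℝ (Fin n)))
    (Em E0 E1 : Set (EuclideanSpace ℝ (Fin n)))
    (hmin : ∀ k, Minimizer n s σm0 σ01 σm1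
      (Metric.ball (0 : EuclideanSpace ℝ (Fin n)) 1) (Emk k) (E0k k) (E1k k))
    (hadm : Admissible n Em E0 E1)
    (hconvm : TendstoL1loc n Emk Em) (hconv0 : TendstoL1loc n E0k E0)
    (hconv1 : TendstoL1loc n E1k E1) :
    Minimizer n s σm0 σ01 σm1 (Metric.ball (0 : EuclideanSpace ℝ (Fin n)) 1) Em E0 E1 ∧
    Tendsto
      (fun k => Fs n s σm0 σ01 σm1
        (Metric.ball (0 : EuclideanSpace ℝ (Fin n)) 1) (Emk k) (E0k k) (E1k k))
      atTop
      (nhds (Fs n s σm0 σ01 σm1 (Metric.ball (0 : EuclideanSpace ℝ (Fin n)) 1) Em E0 E1)) :=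
  minimizers_compact_general n hn s hs σm0 σ01 σm1 Emk E0k E1k Em E0 E1 hmin hadm hconvm hconv0
    hconv1
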